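/- Let r(α) denote the unique nonnegative zero of f(ζ,α) = (1−ζ²)(α + ∫₀^ζ e^{−t²/2} dt) − ζ e^{−ζ²/2}. Then for ζ > r(α), f(ζ,α) < 0, and for 0 ≤ ζ < r(α) with r(α) ≠ 0, f(ζ,α) > 0. -/

import Mathlib

noncomputable def f (ζ α : ℝ) : ℝ :=
  (1 - ζ ^ 2) * (α + ∫ t in (0:ℝ)..ζ, Real.exp (-t ^ 2 / 2)) - ζ * Real.exp (-ζ ^ 2 / 2)

/-!
Differentiating in `ζ`, the two terms `± ζ e^{-ζ²/2}` cancel and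
`∂f/∂ζ = -2ζ (α + ∫₀^ζ e^{-t²/2} dt)`, which is negative for `ζ > 0` when `α ≥ 0`.
So `f(·, α)` is strictly decreasing on `[0, ∞)` and changes sign exactly at its zero `r(α)`.
-/

open Real Set

lemma continuous_exp_neg_sq_half : Continuous fun t : ℝ => exp (-t ^ 2 / 2) := by
  fun_prop

lemma hasDerivAt_integral_exp_neg_sq_half (x : ℝ) :
    HasDerivAt (fun ζ => ∫ t in (0:ℝ)..ζ, exp (-t ^ 2 / 2)) (exp (-x ^ 2 / 2)) x :=
  intervalIntegral.integral_hasDerivAt_right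
    (continuous_exp_neg_sq_half.intervalIntegrable _ _)
    (continuous_exp_neg_sq_half.stronglyMeasurableAtFilter _ _)
    continuous_exp_neg_sq_half.continuousAt

lemma integral_exp_neg_sq_half_pos {x : ℝ} (hx : 0 < x) :
    0 < ∫ t in (0:ℝ)..x, exp (-t ^ 2 / 2) :=
  intervalIntegral.intervalIntegral_pos_of_pos
    (continuous_exp_neg_sq_half.intervalIntegrable _ _) (fun _ => exp_pos _) hx

lemma hasDerivAt_f (α x : ℝ) :
    HasDerivAt (fun ζ => f ζ α) (-2 * x * (α + ∫ t in (0:ℝ)..x, exp (-t ^ 2 / 2))) x := by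
  have hinner : HasDerivAt (fun ζ : ℝ => -ζ ^ 2 / 2) (-x) x := by
    refine ((hasDerivAt_pow 2 x).neg.div_const 2).congr_deriv ?_
    push_cast
    ring
  have h := ((((hasDerivAt_const x 1).sub (hasDerivAt_pow 2 x)).mul
    ((hasDerivAt_const x α).add (hasDerivAt_integral_exp_neg_sq_half x))).sub
    ((hasDerivAt_id x).mul hinner.exp))
  refine h.congr_deriv ?_
  simp only [id_eq, Pi.add_apply, Pi.sub_apply]
  ring

lemma strictAntiOn_f {α : ℝ} (hα : 0 ≤ α) : StrictAntiOn (fun ζ => f ζ α) (Ici 0) := by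
  refine strictAntiOn_of_deriv_neg (convex_Ici 0)
    (fun x _ => (hasDerivAt_f α x).continuousAt.continuousWithinAt) fun x hx => ?_
  rw [interior_Ici, mem_Ioi] at hx
  rw [(hasDerivAt_f α x).deriv]
  exact mul_neg_of_neg_of_pos (by linarith)
    (add_pos_of_nonneg_of_pos hα (integral_exp_neg_sq_half_pos hx))

theorem stmt3 (α rα : ℝ) (hα : 0 ≤ α) (hr0 : 0 ≤ rα) (hrz : f rα α = 0) :
    (∀ ζ : ℝ, rα < ζ → f ζ α < 0) ∧
    (rα ≠ 0 → ∀ ζ : ℝ, 0 ≤ ζ → ζ < rα → 0 < f ζ α) := by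
  have hanti := strictAntiOn_f hα
  refine ⟨fun ζ hζ => ?_, fun _ ζ hζ0 hζr => ?_⟩
  · simpa [hrz] using hanti hr0 (hr0.trans hζ.le : (0:ℝ) ≤ ζ) hζ
  · simpa [hrz] using hanti (hζ0 : (0:ℝ) ≤ ζ) hr0 hζr
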